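/- arXiv:2306.16365 — 4 statements merged into one kernel-verified Lean document; each statement's English description precedes it below -/
import Mathlib

section
/- Let a, c, d ∈ I with c < d lexicographically, and suppose A_t(a,c) = A_t(a,d) = 1, with c − a = v[i_1,…,i_t] and d − a = v[j_1,…,j_t]. Let r = type(c,d). Then i_q = j_q for all q < r, i_r > j_r, and the first coordinate (in the order (1,1),…,(1,k),(2,1),…,(t,k)) at which c and d differ is coordinate (r, j_r). -/
/-- `⟨j_1,…,j_m⟩ = 1 + Σ_{i=1}^m (j_i−1)·k^{m−i}`, the injection `[k]^m → [k^m]`. -/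
def ang (k : ℕ) (l : List ℕ) : ℕ := l.foldl (fun acc j => acc * k + (j - 1)) 0 + 1

/-- The vector `v[j_1,…,j_t]`, given by a function `js : ℕ → ℕ` with `js r` being `j_{r+1}`.
Coordinates are flattened: flat coordinate `i` is coordinate `i % k` (0-indexed) of
block `i / k` (0-indexed).  It is 0 everywhere except at coordinate `j_r` (1-indexed) of
block `r` (1-indexed), where it equals `⟨j_1,…,j_{r−1}⟩`. -/
def vVec (k : ℕ) (js : ℕ → ℕ) (i : ℕ) : ℤ :=
  if i % k + 1 = js (i / k) then (ang k ((List.range (i / k)).map js) : ℤ) else 0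

/-- Membership in `I = {1,…,k^t}^{tk}`. -/
def memI (t k : ℕ) (a : Fin (t * k) → ℕ) : Prop := ∀ i, 1 ≤ a i ∧ a i ≤ k ^ t

/-- Lexicographic (strict) order on tuples. -/
def lexLt {N : ℕ} (a b : Fin N → ℕ) : Prop :=
  ∃ i : Fin N, (∀ j, j < i → a j = b j) ∧ a i < b i

/-- `js` codes an element `(j_1,…,j_t) ∈ [k]^t`. -/
def validJs (t k : ℕ) (js : ℕ → ℕ) : Prop := ∀ r, r < t → 1 ≤ js r ∧ js r ≤ k

/-- The entry `A_t(a,b)` is 1 iff `b − a ∈ S`, i.e. `b − a = v[j_1,…,j_t]` for some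
`(j_1,…,j_t) ∈ [k]^t`. -/
def AtOne (t k : ℕ) (a b : Fin (t * k) → ℕ) : Prop :=
  ∃ js : ℕ → ℕ, validJs t k js ∧
    ∀ i : Fin (t * k), (b i : ℤ) - (a i : ℤ) = vVec k js i.val

/-- `typeOf a b` is the (1-indexed) first block where `a` and `b` differ. -/
noncomputable def typeOf (t k : ℕ) (a b : Fin (t * k) → ℕ) : ℕ :=
  sInf {r | ∃ i : Fin (t * k), i.val / k + 1 = r ∧ a i ≠ b i}

/-!
Write `b` for the block of the first coordinate `i₀` at which `c` and `d` differ, so that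
`d - c = v[j] - v[i]` vanishes before `i₀` and is positive at `i₀`. For `q ≤ b`, the vector
`v[i]` is nonzero at coordinate `(q, i_q)`, and its value there is `⟨i_1,…,i_{q-1}⟩ ≥ 1`. If
that coordinate precedes `i₀`, then `v[j]` must be nonzero there too, which forces
`j_q = i_q`. This gives agreement on all blocks before `b`, so inside block `b` both vectors
take the same value `⟨i_1,…,i_{b-1}⟩` at their single nonzero entries. Positivity at `i₀`
puts `i₀` at `(b, j_b)`, and `(b, i_b)` must come strictly later.
-/

lemma vVec_nonneg (k : ℕ) (js : ℕ → ℕ) (i : ℕ) : 0 ≤ vVec k js i := by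
  unfold vVec
  split_ifs <;> positivity

lemma vVec_ne_zero_iff (k : ℕ) (js : ℕ → ℕ) (i : ℕ) :
    vVec k js i ≠ 0 ↔ i % k + 1 = js (i / k) := by
  unfold vVec
  split_ifs with h
  · simp only [h, iff_true]
    unfold ang
    positivity
  · simp [h]

lemma vVec_congr {k i : ℕ} {is js : ℕ → ℕ} (h : ∀ q ≤ i / k, is q = js q) :
    vVec k is i = vVec k js i := by
  have hprefix : (List.range (i / k)).map is = (List.range (i / k)).map js :=
    List.map_congr_left fun q hq => h q (List.mem_range.mp hq).le
  simp only [vVec, hprefix, h (i / k) le_rfl]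

lemma mul_add_div_of_lt {q k m : ℕ} (hm : m < k) : (q * k + m) / k = q := by
  rw [Nat.add_comm, Nat.add_mul_div_right _ _ (by omega), Nat.div_eq_of_lt hm, zero_add]

lemma vVec_first_diff {k i₀ : ℕ} {is js : ℕ → ℕ}
    (his : ∀ q ≤ i₀ / k, 1 ≤ is q ∧ is q ≤ k)
    (heq : ∀ i < i₀, vVec k is i = vVec k js i)
    (hlt : vVec k is i₀ < vVec k js i₀) :
    (∀ q < i₀ / k, is q = js q) ∧ js (i₀ / k) < is (i₀ / k) ∧
      i₀ = i₀ / k * k + (js (i₀ / k) - 1) := by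
  set b := i₀ / k with hb
  have own_div : ∀ q ≤ b, (q * k + (is q - 1)) / k = q := fun q hq =>
    mul_add_div_of_lt (by have := his q hq; omega)
  have agree : ∀ q ≤ b, q * k + (is q - 1) < i₀ → is q = js q := by
    intro q hq he
    have hmod : (q * k + (is q - 1)) % k + 1 = is q := by
      have := his q hq
      rw [Nat.mul_add_mod_of_lt (by omega)]
      omega
    have hjs : vVec k js _ ≠ 0 :=
      heq _ he ▸ (vVec_ne_zero_iff k is _).mpr (by rwa [own_div q hq])
    rw [vVec_ne_zero_iff, own_div q hq] at hjs
    omega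
  have prefix_eq : ∀ q < b, is q = js q := fun q hq =>
    agree q hq.le (Nat.lt_of_div_lt_div (by rwa [own_div q hq.le]))
  have hi₀ : i₀ % k + 1 = js b :=
    (vVec_ne_zero_iff k js i₀).mp (by linarith [vVec_nonneg k is i₀])
  have hi₀_eq : i₀ = b * k + (js b - 1) := by
    have := Nat.div_add_mod' i₀ k
    rw [← hb] at this
    omega
  refine ⟨prefix_eq, ?_, hi₀_eq⟩
  by_contra! hle
  have hne : is b ≠ js b := by
    intro h
    refine hlt.ne (vVec_congr fun q hq => ?_)
    rcases hq.lt_or_eq with hq | rfl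
    exacts [prefix_eq q hq, h]
  have hlt' : b * k + (is b - 1) < i₀ := by
    have := his b le_rfl
    omega
  exact hne (agree b le_rfl hlt')

lemma typeOf_eq_of_first_diff {t k : ℕ} {c d : Fin (t * k) → ℕ} {i₀ : Fin (t * k)}
    (hpre : ∀ j, j < i₀ → c j = d j) (hne : c i₀ ≠ d i₀) :
    typeOf t k c d = i₀.val / k + 1 := by
  refine le_antisymm (Nat.sInf_le ⟨i₀, rfl, hne⟩) (le_csInf ⟨_, i₀, rfl, hne⟩ ?_)
  rintro _ ⟨i, rfl, hi⟩
  have : i₀ ≤ i := not_lt.mp fun h => hi (hpre i h)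
  exact Nat.succ_le_succ (Nat.div_le_div_right this)

theorem stmt5_general (t k : ℕ)
    (a c d : Fin (t * k) → ℕ)
    (hcd : lexLt c d)
    (is js : ℕ → ℕ) (his : validJs t k is)
    (hca : ∀ i : Fin (t * k), (c i : ℤ) - (a i : ℤ) = vVec k is i.val)
    (hda : ∀ i : Fin (t * k), (d i : ℤ) - (a i : ℤ) = vVec k js i.val)
    (r : ℕ) (hr : r = typeOf t k c d) :
    (∀ q, q + 1 < r → is q = js q) ∧
    js (r - 1) < is (r - 1) ∧
    (∀ i : Fin (t * k),
      (i.val < (r - 1) * k + (js (r - 1) - 1) → c i = d i) ∧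
      (i.val = (r - 1) * k + (js (r - 1) - 1) → c i ≠ d i)) := by
  obtain ⟨i₀, hpre, hlt⟩ := hcd
  have hdiff : ∀ i, vVec k js i.val - vVec k is i.val = (d i : ℤ) - c i := fun i => by
    linarith [hca i, hda i]
  have hr' : r - 1 = i₀.val / k := by
    rw [hr, typeOf_eq_of_first_diff hpre hlt.ne, Nat.add_sub_cancel]
  have hblock_lt : i₀.val / k < t := Nat.div_lt_of_lt_mul (Nat.mul_comm t k ▸ i₀.isLt)
  obtain ⟨hprefix, hswap, hi₀⟩ := vVec_first_diff (i₀ := i₀.val) (js := js)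
    (fun q hq => his q (by omega))
    (fun i hi => by linarith [hdiff ⟨i, by omega⟩, hpre ⟨i, by omega⟩ hi])
    (by linarith [hdiff i₀, (by exact_mod_cast hlt : (c i₀ : ℤ) < d i₀)])
  rw [hr', ← hi₀]
  exact ⟨fun q hq => hprefix q (by omega), hswap,
    fun i => ⟨hpre i, fun h => Fin.ext h ▸ hlt.ne⟩⟩

/-- If `c < d`, `A_t(a,c) = A_t(a,d) = 1` with `c − a = v[i_1,…,i_t]`,
`d − a = v[j_1,…,j_t]`, and `r = type(c,d)`, then `i_q = j_q` for `q < r`,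
`i_r > j_r`, and the first coordinate where `c` and `d` differ is `(r, j_r)`
(flat 0-indexed coordinate `(r−1)·k + (j_r − 1)`). -/
theorem stmt5 (t k : ℕ) (ht : 2 ≤ t) (hk : 2 ≤ k)
    (a c d : Fin (t * k) → ℕ)
    (ha : memI t k a) (hc : memI t k c) (hd : memI t k d)
    (hcd : lexLt c d)
    (is js : ℕ → ℕ) (his : validJs t k is) (hjs : validJs t k js)
    (hca : ∀ i : Fin (t * k), (c i : ℤ) - (a i : ℤ) = vVec k is i.val)
    (hda : ∀ i : Fin (t * k), (d i : ℤ) - (a i : ℤ) = vVec k js i.val)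
    (r : ℕ) (hr : r = typeOf t k c d) :
    (∀ q, q + 1 < r → is q = js q) ∧
    js (r - 1) < is (r - 1) ∧
    (∀ i : Fin (t * k),
      (i.val < (r - 1) * k + (js (r - 1) - 1) → c i = d i) ∧
      (i.val = (r - 1) * k + (js (r - 1) - 1) → c i ≠ d i)) :=
  stmt5_general t k a c d hcd is js his hca hda r hr
end

section
/- Suppose r_1 < r_2 < ⋯ < r_{2t} in I and c < d in I (lexicographic order) satisfy A_t(r_1, c) = A_t(r_1, d) = 1, A_t(r_{2j}, d) = 1 for all j ∈ [t], and A_t(r_{2j+1}, c) = 1 for all j ∈ [t−1] (an occurrence of the pattern Q_t in A_t with rows r_1, …, r_{2t} and columns c, d). If type(r_1, r_{2t}) ≥ type(c, d), then type(r_1, r_{2t}) = type(c, d) = 1. -/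
/-- `⟨j_1, …, j_p⟩`, where `j q` stands for `j_{q+1}`. -/
def prefixCode (k : ℕ) (j : ℕ → ℕ) (p : ℕ) : ℕ := ang k ((List.range p).map j)

def LtAt (u u' : ℕ → ℕ) (p : ℕ) : Prop := (∀ q < p, u q = u' q) ∧ u p < u' p

def LexPos {N : ℕ} (f : Fin N → ℤ) : Prop := ∃ i, (∀ j < i, f j = 0) ∧ 0 < f i

def vFin (t k : ℕ) (j : ℕ → ℕ) : Fin (t * k) → ℤ := fun n => vVec k j n

section Blocks

variable {t k : ℕ}

lemma mul_add_lt_mul {p q : ℕ} (hp : p < t) (hq : q < k) : p * k + q < t * k := by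
  have := Nat.mul_le_mul_right k (Nat.succ_le_of_lt hp)
  rw [Nat.succ_mul] at this
  omega

lemma mul_add_div {p q : ℕ} (hq : q < k) : (p * k + q) / k = p :=
  Nat.div_eq_of_lt_le (Nat.le_add_right _ _) (by rw [Nat.succ_mul]; omega)

lemma mul_add_mod {p q : ℕ} (hq : q < k) : (p * k + q) % k = q := by
  rw [Nat.add_comm, Nat.add_mul_mod_self_right, Nat.mod_eq_of_lt hq]

lemma prefixCode_pos (j : ℕ → ℕ) (p : ℕ) : 0 < prefixCode k j p := Nat.succ_pos _

lemma prefixCode_congr {j j' : ℕ → ℕ} {p : ℕ} (h : ∀ q < p, j q = j' q) :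
    prefixCode k j p = prefixCode k j' p := by
  unfold prefixCode
  rw [List.map_congr_left fun q hq => h q (List.mem_range.mp hq)]

lemma prefixCode_succ (j : ℕ → ℕ) (p : ℕ) :
    prefixCode k j (p + 1) = (prefixCode k j p - 1) * k + (j p - 1) + 1 := by
  simp [prefixCode, ang, List.range_succ, List.foldl_append]

lemma prefixCode_lt_of_ltAt {u u' : ℕ → ℕ} {p₀ p : ℕ} (hu : validJs t k u) (h : LtAt u u' p₀)
    (hp : p₀ < p) (hpt : p ≤ t) : prefixCode k u p < prefixCode k u' p := by
  induction p, hp using Nat.le_induction with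
  | base =>
    rw [prefixCode_succ, prefixCode_succ, prefixCode_congr h.1]
    have := (hu p₀ (by omega)).1
    have := h.2
    omega
  | succ n hn ih =>
    rw [prefixCode_succ, prefixCode_succ]
    have hlt := ih (by omega)
    have hun := hu n (by omega)
    have := prefixCode_pos (k := k) u n
    have := Nat.mul_le_mul_right k
      (show prefixCode k u n - 1 + 1 ≤ prefixCode k u' n - 1 by omega)
    rw [Nat.succ_mul] at this
    omega

lemma vVec_mul_add (j : ℕ → ℕ) (p : ℕ) {q : ℕ} (hq : q < k) :
    vVec k j (p * k + q) = if q + 1 = j p then (prefixCode k j p : ℤ) else 0 := by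
  rw [vVec, mul_add_div hq, mul_add_mod hq, prefixCode]

lemma vVec_congr_s9 {j j' : ℕ → ℕ} {n : ℕ} (h : ∀ q ≤ n / k, j q = j' q) :
    vVec k j n = vVec k j' n := by
  rw [vVec, vVec, h _ le_rfl, ← prefixCode, ← prefixCode,
    prefixCode_congr fun q hq => h q hq.le]

lemma vFin_congr {j j' : ℕ → ℕ} (h : ∀ q < t, j q = j' q) : vFin t k j = vFin t k j' :=
  funext fun n => vVec_congr_s9 fun q hq =>
    h q (lt_of_le_of_lt hq (Nat.div_lt_of_lt_mul (Nat.mul_comm t k ▸ n.isLt)))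

end Blocks

section LexPos

variable {N : ℕ}

lemma LexPos.nonneg {f : Fin N → ℤ} (h : LexPos f) {n : Fin N} (hn : ∀ m < n, f m = 0) :
    0 ≤ f n := by
  obtain ⟨i, hi, hpos⟩ := h
  rcases lt_trichotomy i n with h | rfl | h
  · exact absurd (hn i h) hpos.ne'
  · exact hpos.le
  · exact (hi n h).ge

lemma not_lexPos_zero : ¬ LexPos (0 : Fin N → ℤ) := fun ⟨_, _, h⟩ => h.ne' rfl

lemma lexPos_of_lexLt {x y : Fin N → ℕ} {f : Fin N → ℤ} (h : lexLt x y)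
    (hf : ∀ n, (y n : ℤ) - x n = f n) : LexPos f := by
  obtain ⟨i, hi, hlt⟩ := h
  exact ⟨i, fun j hj => by rw [← hf, hi j hj, sub_self], by rw [← hf]; omega⟩

end LexPos

/-- Block `p` of `v[j₁] − v[j₂] + v[j₃] − v[j₄]` when `j₁, j₄` and `j₂, j₃` agree before block `p`,
so that they share prefix codes. -/
def blockProfile (k : ℕ) (j₁ j₂ j₃ j₄ : ℕ → ℕ) (p q : ℕ) : ℤ :=
  (if q + 1 = j₁ p then (prefixCode k j₁ p : ℤ) else 0)
    - (if q + 1 = j₂ p then (prefixCode k j₂ p : ℤ) else 0)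
    + (if q + 1 = j₃ p then (prefixCode k j₂ p : ℤ) else 0)
    - (if q + 1 = j₄ p then (prefixCode k j₁ p : ℤ) else 0)

section Profile

variable {t k : ℕ}

lemma LexPos.blockProfile_nonneg (hk : 0 < k) {j₁ j₂ j₃ j₄ : ℕ → ℕ} {p q₀ : ℕ}
    (hpos : LexPos (vFin t k j₁ - vFin t k j₂ + vFin t k j₃ - vFin t k j₄))
    (hp : p < t) (hq₀ : q₀ < k) (h₁₄ : ∀ q < p, j₁ q = j₄ q) (h₂₃ : ∀ q < p, j₂ q = j₃ q)
    (hzero : ∀ q < q₀, blockProfile k j₁ j₂ j₃ j₄ p q = 0) :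
    0 ≤ blockProfile k j₁ j₂ j₃ j₄ p q₀ := by
  set f := vFin t k j₁ - vFin t k j₂ + vFin t k j₃ - vFin t k j₄
  have hbefore : ∀ n : Fin (t * k), (n : ℕ) < p * k → f n = 0 := by
    intro n hn
    have hn' : (n : ℕ) / k < p := (Nat.div_lt_iff_lt_mul hk).2 hn
    simp only [f, vFin, Pi.sub_apply, Pi.add_apply]
    rw [vVec_congr_s9 (j := j₁) (j' := j₄) fun q hq => h₁₄ q (by omega),
      vVec_congr_s9 (j := j₂) (j' := j₃) fun q hq => h₂₃ q (by omega)]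
    ring
  have hblock : ∀ q (hq : q < k),
      f ⟨p * k + q, mul_add_lt_mul hp hq⟩ = blockProfile k j₁ j₂ j₃ j₄ p q := by
    intro q hq
    simp only [f, vFin, Pi.sub_apply, Pi.add_apply, vVec_mul_add _ _ hq, blockProfile,
      prefixCode_congr h₁₄, prefixCode_congr h₂₃]
  rw [← hblock q₀ hq₀]
  refine hpos.nonneg fun n hn => ?_
  rw [Fin.lt_def] at hn
  by_cases hnp : (n : ℕ) < p * k
  · exact hbefore n hnp
  · obtain ⟨q, hq⟩ : ∃ q, (n : ℕ) = p * k + q := ⟨n - p * k, by omega⟩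
    have hqq₀ : q < q₀ := by simp only at hn; omega
    rw [show n = ⟨p * k + q, mul_add_lt_mul hp (by omega)⟩ from Fin.ext hq, hblock q (by omega)]
    exact hzero q hqq₀

end Profile

section Tuples

variable {t k : ℕ}

lemma le_of_lexPos_vFin_sub (hk : 0 < k) {u u' : ℕ → ℕ} {p : ℕ} (hu' : validJs t k u')
    (h : LexPos (vFin t k u - vFin t k u')) (hp : p < t) (heq : ∀ q < p, u q = u' q) :
    u p ≤ u' p := by
  by_contra! hlt
  have hu'p := hu' p hp
  have hW := prefixCode_pos (k := k) u p
  have := (show LexPos (vFin t k u - vFin t k u' + vFin t k u' - vFin t k u') by simpa using h)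
    |>.blockProfile_nonneg hk hp (q₀ := u' p - 1) (by omega) heq (fun _ _ => rfl)
      fun q hq => by simp only [blockProfile]; split_ifs <;> omega
  simp only [blockProfile] at this
  split_ifs at this <;> omega

lemma exists_ltAt_of_lexPos (hk : 0 < k) {u u' : ℕ → ℕ} (hu' : validJs t k u')
    (h : LexPos (vFin t k u - vFin t k u')) : ∃ p < t, LtAt u u' p := by
  have hex : ∃ p, p < t ∧ u p ≠ u' p := by
    by_contra! hall
    rw [vFin_congr hall, sub_self] at h
    exact not_lexPos_zero h
  have hagree : ∀ q < Nat.find hex, u q = u' q := fun q hq => by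
    by_contra hne
    exact Nat.find_min hex hq ⟨hq.trans (Nat.find_spec hex).1, hne⟩
  obtain ⟨hpt, hne⟩ := Nat.find_spec hex
  exact ⟨_, hpt, hagree, lt_of_le_of_ne (le_of_lexPos_vFin_sub hk hu' h hpt hagree) hne⟩

lemma typeOf_eq {x y : Fin (t * k) → ℕ} {p : ℕ}
    (hsame : ∀ n : Fin (t * k), (n : ℕ) / k < p → x n = y n) {n₀ : Fin (t * k)}
    (hn₀ : (n₀ : ℕ) / k = p) (hne : x n₀ ≠ y n₀) : typeOf t k x y = p + 1 := by
  have hmem : p + 1 ∈ {r | ∃ i : Fin (t * k), (i : ℕ) / k + 1 = r ∧ x i ≠ y i} :=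
    ⟨n₀, by omega, hne⟩
  refine le_antisymm (Nat.sInf_le hmem) (le_csInf ⟨_, hmem⟩ ?_)
  rintro _ ⟨n, rfl, hn⟩
  by_contra! hlt
  exact hn (hsame n (by omega))

lemma typeOf_eq_of_ltAt {u u' : ℕ → ℕ} {x y : Fin (t * k) → ℕ} {p : ℕ} (hu : validJs t k u)
    (hf : ∀ n, (y n : ℤ) - x n = (vFin t k u - vFin t k u') n) (h : LtAt u u' p) (hp : p < t) :
    typeOf t k x y = p + 1 := by
  have hup := hu p hp
  have hq : u p - 1 < k := by omega
  refine typeOf_eq (n₀ := ⟨p * k + (u p - 1), mul_add_lt_mul hp hq⟩) (fun n hn => ?_)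
    (mul_add_div hq) fun hxy => ?_
  · have hfn := hf n
    simp only [vFin, Pi.sub_apply] at hfn
    rw [vVec_congr_s9 (n := n) fun q hq => h.1 q (by omega), sub_self] at hfn
    omega
  · have hfn₀ := hf ⟨p * k + (u p - 1), mul_add_lt_mul hp hq⟩
    simp only [vFin, Pi.sub_apply, vVec_mul_add _ _ hq, hxy, sub_self] at hfn₀
    rw [if_pos (by omega), if_neg (by have := h.2; omega)] at hfn₀
    have := prefixCode_pos (k := k) u p
    omega

end Tuples

/-- The tuples of an occurrence of `Q_t` with rows `r_0 < ⋯ < r_{2t−1}` and columns `c < d`: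
`d − r_0 = v[w]`, `c − r_{2i} = v[a i]` and `d − r_{2i+1} = v[b i]`, together with the order of
the rows expressed through them. -/
structure QtWitness (t k : ℕ) where
  w : ℕ → ℕ
  a : ℕ → ℕ → ℕ
  b : ℕ → ℕ → ℕ
  valid_w : validJs t k w
  valid_a : ∀ i < t, validJs t k (a i)
  valid_b : ∀ i < t, validJs t k (b i)
  /-- `r_0 < r_{2i+1}` -/
  lexPos_w_b : ∀ i < t, LexPos (vFin t k w - vFin t k (b i))
  /-- `r_0 < r_{2i}` -/
  lexPos_a_a : ∀ i < t, 0 < i → LexPos (vFin t k (a 0) - vFin t k (a i))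
  /-- `r_{2i+1} < r_{2t−1}` -/
  lexPos_b_b : ∀ i < t - 1, LexPos (vFin t k (b i) - vFin t k (b (t - 1)))
  /-- `r_{2i} < r_{2i+1}` -/
  lexPos_odd : ∀ i < t,
    LexPos (vFin t k w - vFin t k (a 0) + vFin t k (a i) - vFin t k (b i))
  /-- `r_{2i+1} < r_{2i+2}` -/
  lexPos_even : ∀ i, i + 1 < t →
    LexPos (vFin t k (b i) - vFin t k (a (i + 1)) + vFin t k (a 0) - vFin t k w)

namespace QtWitness

variable {t k : ℕ} (T : QtWitness t k)

lemma w_le_b (hk : 0 < k) {i p : ℕ} (hi : i < t) (hp : p < t) (h : ∀ q < p, T.b i q = T.w q) :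
    T.w p ≤ T.b i p :=
  le_of_lexPos_vFin_sub hk (T.valid_b i hi) (T.lexPos_w_b i hi) hp fun q hq => (h q hq).symm

lemma a_zero_le (hk : 0 < k) {i p : ℕ} (hi : i < t) (hp : p < t)
    (h : ∀ q < p, T.a i q = T.a 0 q) : T.a 0 p ≤ T.a i p := by
  rcases Nat.eq_zero_or_pos i with rfl | hi₀
  · exact le_rfl
  · exact le_of_lexPos_vFin_sub hk (T.valid_a i hi) (T.lexPos_a_a i hi hi₀) hp
      fun q hq => (h q hq).symm

lemma b_le_b_last (hk : 0 < k) {i p : ℕ} (hi : i < t) (hp : p < t)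
    (h : ∀ q < p, T.b i q = T.b (t - 1) q) : T.b i p ≤ T.b (t - 1) p := by
  rcases (show i < t - 1 ∨ i = t - 1 by omega) with hi' | rfl
  · exact le_of_lexPos_vFin_sub hk (T.valid_b _ (by omega)) (T.lexPos_b_b i hi') hp h
  · exact le_rfl

lemma a_eq (hk : 0 < k) {i p : ℕ} (hi : i < t) (hp : p < t) (hb : ∀ q < p, T.b i q = T.w q)
    (ha : ∀ q < p, T.a i q = T.a 0 q)
    (h : T.b i p = T.w p ∨ T.a 0 p < T.w p ∨
      T.a 0 p = T.w p ∧ prefixCode k T.w p < prefixCode k (T.a 0) p) :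
    T.a i p = T.a 0 p := by
  have hai := T.a_zero_le hk hi hp ha
  have hbi := T.w_le_b hk hi hp hb
  have ha₀ := T.valid_a 0 (by omega) p hp
  have := prefixCode_pos (k := k) T.w p
  have := prefixCode_pos (k := k) (T.a 0) p
  by_contra hne
  have := (T.lexPos_odd i hi).blockProfile_nonneg hk hp (q₀ := T.a 0 p - 1) (by omega)
    (fun q hq => (hb q hq).symm) (fun q hq => (ha q hq).symm)
    fun q hq => by simp only [blockProfile]; split_ifs <;> omega
  simp only [blockProfile] at this
  split_ifs at this <;> omega

lemma b_eq (hk : 0 < k) {i p : ℕ} (hi : i + 1 < t) (hp : p < t) (hb : ∀ q < p, T.b i q = T.w q)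
    (ha : ∀ q < p, T.a (i + 1) q = T.a 0 q) (h : T.a (i + 1) p = T.a 0 p ∨ T.w p < T.a 0 p) :
    T.b i p = T.w p := by
  have hai := T.a_zero_le hk hi hp ha
  have hbi := T.w_le_b hk (by omega) hp hb
  have hw := T.valid_w p hp
  have := prefixCode_pos (k := k) (T.b i) p
  have := prefixCode_pos (k := k) (T.a (i + 1)) p
  by_contra hne
  have := (T.lexPos_even i hi).blockProfile_nonneg hk hp (q₀ := T.w p - 1) (by omega) hb ha
    fun q hq => by simp only [blockProfile]; split_ifs <;> omega
  simp only [blockProfile] at this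
  split_ifs at this <;> omega

def Aligned (p m : ℕ) : Prop := ∀ i ≤ m, ∀ q < p, T.b i q = T.w q ∧ T.a i q = T.a 0 q

lemma Aligned.succ {T : QtWitness t k} {p m m' : ℕ} (h : T.Aligned p m') (hm : m ≤ m')
    (hp : ∀ i ≤ m, T.b i p = T.w p ∧ T.a i p = T.a 0 p) : T.Aligned (p + 1) m := by
  intro i hi q hq
  rcases Nat.lt_succ_iff_lt_or_eq.1 hq with hq | rfl
  · exact h i (hi.trans hm) q hq
  · exact hp i hi

lemma aligned_succ_of_lt (hk : 0 < k) {P p : ℕ} (hP : LtAt T.w (T.b (t - 1)) P) (hPt : P < t)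
    (hp : p < P) (h : T.Aligned p (t - 1)) : T.Aligned (p + 1) (t - 1) := by
  refine h.succ le_rfl fun i hi => ?_
  have hb : ∀ q < p, T.b i q = T.w q := fun q hq => (h i hi q hq).1
  have hbi : T.b i p = T.w p := by
    refine le_antisymm ?_ (T.w_le_b hk (by omega) (by omega) hb)
    calc T.b i p ≤ T.b (t - 1) p :=
          T.b_le_b_last hk (by omega) (by omega) fun q hq => by rw [hb q hq, (h _ le_rfl q hq).1]
      _ = T.w p := (hP.1 p hp).symm
  exact ⟨hbi, T.a_eq hk (by omega) (by omega) hb (fun q hq => (h i hi q hq).2) (Or.inl hbi)⟩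

lemma aligned_succ_of_le (hk : 0 < k) {pm p m : ℕ} (hpm : LtAt T.w (T.a 0) pm) (hp : pm ≤ p)
    (hpt : p < t) (hm : m + 1 < t) (h : T.Aligned p (m + 1)) : T.Aligned (p + 1) m := by
  have hb : ∀ i ≤ m + 1, ∀ q < p, T.b i q = T.w q := fun i hi q hq => (h i hi q hq).1
  have ha : ∀ i ≤ m + 1, ∀ q < p, T.a i q = T.a 0 q := fun i hi q hq => (h i hi q hq).2
  refine h.succ (Nat.le_succ m) fun i hi => ?_
  rcases lt_or_ge (T.w p) (T.a 0 p) with hwa | haw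
  · have hbi := T.b_eq hk (by omega) hpt (hb i (by omega)) (ha (i + 1) (by omega)) (Or.inr hwa)
    exact ⟨hbi, T.a_eq hk (by omega) hpt (hb i (by omega)) (ha i (by omega)) (Or.inl hbi)⟩
  · have hai : ∀ i ≤ m + 1, T.a i p = T.a 0 p := fun i hi =>
      T.a_eq hk (by omega) hpt (hb i hi) (ha i hi) <| by
        rcases haw.lt_or_eq with hlt | heq
        · exact Or.inr (Or.inl hlt)
        · refine Or.inr (Or.inr ⟨heq, prefixCode_lt_of_ltAt T.valid_w hpm ?_ hpt.le⟩)
          exact lt_of_le_of_ne hp fun he => by subst he; have := hpm.2; omega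
    exact ⟨T.b_eq hk (by omega) hpt (hb i (by omega)) (ha (i + 1) (by omega))
      (Or.inl (hai (i + 1) (by omega))), hai i (by omega)⟩

theorem eq_zero_of_ltAt (hk : 0 < k) {pm P : ℕ} (hpm : LtAt T.w (T.a 0) pm)
    (hP : LtAt T.w (T.b (t - 1)) P) (hPt : P < t) (hle : pm ≤ P) : P = 0 := by
  by_contra hP₀
  have hbefore : ∀ p ≤ P, T.Aligned p (t - 1) := by
    intro p hp
    induction p with
    | zero => exact fun _ _ q hq => absurd hq (Nat.not_lt_zero q)
    | succ p ih => exact T.aligned_succ_of_lt hk hP hPt (by omega) (ih (by omega))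
  have hafter : ∀ s ≤ t - P, T.Aligned (P + s) (t - 1 - s) := by
    intro s hs
    induction s with
    | zero => exact hbefore P le_rfl
    | succ s ih =>
      have := T.aligned_succ_of_le hk hpm (p := P + s) (m := t - 2 - s)
        (by omega) (by omega) (by omega)
        (by rw [show t - 2 - s + 1 = t - 1 - s by omega]; exact ih (by omega))
      rwa [show t - 2 - s = t - 1 - (s + 1) by omega] at this
  have hw := T.lexPos_w_b 0 (by omega)
  rw [vFin_congr fun q hq => ((hafter (t - P) le_rfl 0 (Nat.zero_le _) q (by omega)).1).symm,
    sub_self] at hw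
  exact not_lexPos_zero hw

end QtWitness

lemma exists_qtWitness {t k : ℕ} (ht : 0 < t) (R : ℕ → Fin (t * k) → ℕ) (c d : Fin (t * k) → ℕ)
    (hmono : ∀ m n, m < n → n < 2 * t → lexLt (R m) (R n))
    (h0c : AtOne t k (R 0) c) (h0d : AtOne t k (R 0) d)
    (h1 : ∀ j < t, AtOne t k (R (2 * j + 1)) d) (h2 : ∀ j < t - 1, AtOne t k (R (2 * j + 2)) c) :
    ∃ T : QtWitness t k, (∀ n, (d n : ℤ) - c n = (vFin t k T.w - vFin t k (T.a 0)) n) ∧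
      ∀ n, (R (2 * t - 1) n : ℤ) - R 0 n = (vFin t k T.w - vFin t k (T.b (t - 1))) n := by
  obtain ⟨w, hw, hdw⟩ := h0d
  obtain ⟨a₀, ha₀, hca₀⟩ := h0c
  choose! b hb hdb using h1
  choose! a' ha' hca' using h2
  set a : ℕ → ℕ → ℕ := fun i => if i = 0 then a₀ else a' (i - 1)
  have hva : ∀ i < t, validJs t k (a i) := fun i hi => by
    rcases i with _ | i
    · exact ha₀
    · exact ha' i (by omega)
  have hca : ∀ i < t, ∀ n, (c n : ℤ) - R (2 * i) n = vVec k (a i) n := fun i hi n => by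
    rcases i with _ | i
    · exact hca₀ n
    · exact hca' i (by omega) n
  have hlex : ∀ m n, m < n → n < 2 * t → ∀ f : Fin (t * k) → ℤ,
      (∀ x, (R n x : ℤ) - R m x = f x) → LexPos f := fun m n hmn hn _ hf =>
    lexPos_of_lexLt (hmono m n hmn hn) hf
  refine ⟨⟨w, a, b, hw, hva, hb, fun i hi => hlex 0 (2 * i + 1) (by omega) (by omega) _ fun x => ?_,
    fun i hi hi₀ => hlex 0 (2 * i) (by omega) (by omega) _ fun x => ?_,
    fun i hi => hlex (2 * i + 1) (2 * (t - 1) + 1) (by omega) (by omega) _ fun x => ?_,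
    fun i hi => hlex (2 * i) (2 * i + 1) (by omega) (by omega) _ fun x => ?_,
    fun i hi => hlex (2 * i + 1) (2 * (i + 1)) (by omega) (by omega) _ fun x => ?_⟩,
    fun x => ?_, fun x => ?_⟩ <;>
  simp only [vFin, Pi.sub_apply, Pi.add_apply]
  · linarith [hdw x, hdb i hi x]
  · linarith [hca 0 ht x, hca i hi x]
  · linarith [hdb i (by omega) x, hdb (t - 1) (by omega) x]
  · linarith [hdw x, hca 0 ht x, hca i hi x, hdb i hi x]
  · linarith [hdw x, hca 0 ht x, hca (i + 1) hi x, hdb i (by omega) x]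
  · linarith [hdw x, hca 0 ht x]
  · rw [show 2 * t - 1 = 2 * (t - 1) + 1 by omega]
    linarith [hdw x, hdb (t - 1) (by omega) x]

/-- An occurrence of `Q_t` in `A_t` with rows `r 0 < r 1 < ⋯ < r (2t−1)` and columns
`c < d`: `A_t(r 0, c) = A_t(r 0, d) = 1`, `A_t(r_{2j}, d) = 1` for `j ∈ [t]`
(0-indexed rows `2j+1` for `j < t`), and `A_t(r_{2j+1}, c) = 1` for `j ∈ [t−1]`
(0-indexed rows `2j+2` for `j < t−1`).
If `type(r 0, r (2t−1)) ≥ type(c,d)` then both types equal 1. -/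
theorem stmt9 (t k : ℕ) (ht : 2 ≤ t) (hk : 2 ≤ k)
    (r : Fin (2 * t) → Fin (t * k) → ℕ) (c d : Fin (t * k) → ℕ)
    (hmono : ∀ i j : Fin (2 * t), i < j → lexLt (r i) (r j))
    (hcd : lexLt c d)
    (h0c : AtOne t k (r ⟨0, by omega⟩) c)
    (h0d : AtOne t k (r ⟨0, by omega⟩) d)
    (h1 : ∀ j : ℕ, ∀ h : j < t, AtOne t k (r ⟨2 * j + 1, by omega⟩) d)
    (h2 : ∀ j : ℕ, ∀ h : j < t - 1, AtOne t k (r ⟨2 * j + 2, by omega⟩) c)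
    (hty : typeOf t k c d ≤ typeOf t k (r ⟨0, by omega⟩) (r ⟨2 * t - 1, by omega⟩)) :
    typeOf t k (r ⟨0, by omega⟩) (r ⟨2 * t - 1, by omega⟩) = 1 ∧ typeOf t k c d = 1 := by
  set R : ℕ → Fin (t * k) → ℕ := fun n => if h : n < 2 * t then r ⟨n, h⟩ else c
  have hR : ∀ n (h : n < 2 * t), R n = r ⟨n, h⟩ := fun n h => dif_pos h
  have hmonoR : ∀ m n, m < n → n < 2 * t → lexLt (R m) (R n) := fun m n hmn hn => by
    rw [hR m (by omega), hR n hn]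
    exact hmono _ _ hmn
  obtain ⟨T, hdc, hrr⟩ := exists_qtWitness (by omega) R c d hmonoR (by rwa [hR])
    (by rwa [hR]) (fun j hj => by rw [hR]; exact h1 j hj) fun j hj => by rw [hR]; exact h2 j hj
  obtain ⟨pm, hpm, hltm⟩ := exists_ltAt_of_lexPos (by omega) (T.valid_a 0 (by omega))
    (lexPos_of_lexLt hcd hdc)
  obtain ⟨P, hP, hltP⟩ := exists_ltAt_of_lexPos (by omega) (T.valid_b _ (by omega))
    (lexPos_of_lexLt (hmonoR 0 (2 * t - 1) (by omega) (by omega)) hrr)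
  have htype := typeOf_eq_of_ltAt T.valid_w hrr hltP hP
  rw [hR 0 (by omega), hR (2 * t - 1) (by omega)] at htype
  rw [htype, typeOf_eq_of_ltAt T.valid_w hdc hltm hpm] at hty ⊢
  have := T.eq_zero_of_ltAt (by omega) hltm hltP hP (by omega)
  omega
end

section
/- Let r_1 < r_2 < r_3 < r_4 and s_1 < s_2 in I (lexicographic order), and suppose A_t(r_1, s_1) = A_t(r_1, s_2) = A_t(r_2, s_2) = A_t(r_3, s_1) = A_t(r_4, s_2) = 1. If type(s_1, s_2) ≤ type(r_1, r_4), then type(r_1, r_4) < type(r_1, r_2). -/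
/-!
If `b - a = v[β] - v[γ]`, where `β, γ ∈ [k]^t` first differ at position `d` with `β_d < γ_d`, then
`v[β]` and `v[γ]` coincide on the blocks before `d` and put the same value `⟨β_1, …, β_{d-1}⟩` in
block `d`, at coordinates `β_d` and `γ_d` respectively. So `b - a` vanishes before coordinate
`(d, β_d)` and is positive there: `a < b`, `type(a, b) = d`, and the place and size of this first
rise determine `β_1, …, β_d`.

Write `s₁ = r₁ + v[α] = r₃ + v[δ]` and `s₂ = r₁ + v[β] = r₂ + v[γ] = r₄ + v[ε]`, and suppose
`p = type(r₁, r₂) ≤ q = type(r₁, r₄)`. If `p < q`, then `ε` and `γ` agree before `p` while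
`ε_p = β_p < γ_p`, forcing `r₄ < r₂`. If `p = q`, then `r₂` and `r₄` rise over `r₁` at the same
place by the same amount, so `r₃`, squeezed between them, does too; reading `α` off that rise gives
`α_j = β_j` for `j ≤ p`, that is, `type(s₁, s₂) > p`.
-/

section Lex

variable {N : ℕ} {a b x y : Fin N → ℕ}

-- `lexLt` is, by definition, the order `<` on `Lex (Fin N → ℕ)`.
theorem lexLt.trans (hab : lexLt a b) (hbx : lexLt b x) : lexLt a x :=
  lt_trans (α := Lex (Fin N → ℕ)) hab hbx

theorem lexLt.asymm (hab : lexLt a b) : ¬ lexLt b a :=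
  lt_asymm (α := Lex (Fin N → ℕ)) hab

def FirstRise (a b : Fin N → ℕ) (i : Fin N) (c : ℕ) : Prop :=
  (∀ j < i, a j = b j) ∧ 0 < c ∧ b i = a i + c

variable {i i' : Fin N} {c c' : ℕ}

theorem FirstRise.apply_lt (h : FirstRise a b i c) : a i < b i :=
  h.2.2 ▸ Nat.lt_add_of_pos_right h.2.1

theorem FirstRise.lexLt (h : FirstRise a b i c) : lexLt a b :=
  ⟨i, h.1, h.apply_lt⟩

theorem FirstRise.unique (h : FirstRise a b i c) (h' : FirstRise a b i' c') :
    i = i' ∧ c = c' := by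
  obtain ⟨hlt, hc, hi⟩ := h
  obtain ⟨hlt', hc', hi'⟩ := h'
  obtain rfl : i = i' := by
    rcases lt_trichotomy i i' with hii | rfl | hii
    · have := hlt' i hii; omega
    · rfl
    · have := hlt i' hii; omega
  exact ⟨rfl, by omega⟩

theorem FirstRise.typeOf_eq {t k : ℕ} {a b : Fin (t * k) → ℕ} {i : Fin (t * k)}
    (h : FirstRise a b i c) : typeOf t k a b = i / k + 1 := by
  refine IsLeast.csInf_eq ⟨⟨i, rfl, h.apply_lt.ne⟩, ?_⟩
  rintro r ⟨j, rfl, hj⟩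
  have hij : i ≤ j := not_lt.1 fun hji => hj (h.1 j hji)
  exact Nat.add_le_add_right (Nat.div_le_div_right hij) 1

/-- `b` and `y` agree up to `i`, hence so does everything lexicographically between them. -/
theorem FirstRise.of_lexLt_of_lexLt (hb : FirstRise a b i c) (hy : FirstRise a y i c)
    (hbx : _root_.lexLt b x) (hxy : _root_.lexLt x y) : FirstRise a x i c := by
  have hby : ∀ j ≤ i, b j = y j := by
    intro j hj
    rcases hj.lt_or_eq with hj | rfl
    · exact (hb.1 j hj).symm.trans (hy.1 j hj)
    · exact hb.2.2.trans hy.2.2.symm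
  obtain ⟨j, hbxj, hj⟩ := hbx
  obtain ⟨j', hxyj, hj'⟩ := hxy
  have hij : i < j := by
    by_contra! hji
    rcases lt_trichotomy j j' with hjj | rfl | hjj
    · have := hxyj j hjj; have := hby j hji; omega
    · have := hby j hji; omega
    · have := hbxj j' hjj; have := hby j' (hjj.le.trans hji); omega
  have hxb : ∀ l ≤ i, x l = b l := fun l hl => (hbxj l (hl.trans_lt hij)).symm
  exact ⟨fun l hl => (hb.1 l hl).trans (hxb l hl.le).symm, hb.2.1, by rw [hxb i le_rfl, hb.2.2]⟩

end Lex

section Coding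

variable {k d : ℕ} {α β γ : ℕ → ℕ}

theorem ang_eq_ofDigits (k : ℕ) (l : List ℕ) :
    ang k l = Nat.ofDigits k (l.map (· - 1)).reverse + 1 := by
  unfold ang
  induction l using List.reverseRecOn with
  | nil => simp
  | append_singleton l x ih =>
    simp only [List.foldl_append, List.foldl_cons, List.foldl_nil, List.map_append,
      List.map_cons, List.map_nil, List.reverse_append, List.reverse_cons, List.reverse_nil,
      List.nil_append, List.cons_append, Nat.ofDigits_cons] at ih ⊢
    rw [Nat.add_right_cancel ih]
    ring

theorem ang_pos (k : ℕ) (l : List ℕ) : 0 < ang k l := Nat.succ_pos _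

theorem eq_of_ang_map_range_eq (hk : 1 < k) (hα : ∀ j < d, 1 ≤ α j ∧ α j ≤ k)
    (hβ : ∀ j < d, 1 ≤ β j ∧ β j ≤ k)
    (h : ang k ((List.range d).map α) = ang k ((List.range d).map β)) :
    ∀ j < d, α j = β j := by
  simp only [ang_eq_ofDigits, List.map_map, add_left_inj] at h
  have digit_lt {γ : ℕ → ℕ} (hγ : ∀ j < d, 1 ≤ γ j ∧ γ j ≤ k) :
      ∀ x ∈ ((List.range d).map ((· - 1) ∘ γ)).reverse, x < k := by
    simp only [List.mem_reverse, List.mem_map, List.mem_range, Function.comp_apply]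
    rintro _ ⟨j, hj, rfl⟩
    have := hγ j hj
    omega
  have hdigits := Nat.ofDigits_inj_of_len_eq hk (by simp) (digit_lt hα) (digit_lt hβ) h
  rw [List.reverse_inj, List.map_inj_left] at hdigits
  intro j hj
  have hj' := hdigits j (List.mem_range.2 hj)
  simp only [Function.comp_apply] at hj'
  have := hα j hj
  have := hβ j hj
  omega

end Coding

section LeadingEntry

variable {k t d : ℕ} {β γ : ℕ → ℕ}

/-- The flat index of coordinate `β d` of block `d` (both as in `vVec`). When `β` and `γ` first
differ at `d` with `β d < γ d`, this is where `v[β] - v[γ]` has its first nonzero entry. -/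
def leadIdx (k : ℕ) (β : ℕ → ℕ) (d : ℕ) : ℕ := k * d + (β d - 1)

theorem leadIdx_div (h : 1 ≤ β d ∧ β d ≤ k) : leadIdx k β d / k = d := by
  rw [leadIdx, Nat.mul_add_div (by omega), Nat.div_eq_of_lt (by omega), add_zero]

theorem leadIdx_mod (h : 1 ≤ β d ∧ β d ≤ k) : leadIdx k β d % k = β d - 1 := by
  rw [leadIdx, Nat.mul_add_mod, Nat.mod_eq_of_lt (by omega)]

theorem leadIdx_lt (hd : d < t) (h : 1 ≤ β d ∧ β d ≤ k) : leadIdx k β d < t * k := by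
  have : k * (d + 1) ≤ k * t := Nat.mul_le_mul_left k hd
  rw [leadIdx, Nat.mul_comm t]
  rw [Nat.mul_succ] at this
  omega

theorem vVec_congr_s11 (hagree : ∀ j < d, β j = γ j) {i : ℕ} (hi : i / k < d) :
    vVec k β i = vVec k γ i := by
  rw [vVec, vVec, hagree _ hi,
    List.map_congr_left fun j hj => hagree j ((List.mem_range.1 hj).trans hi)]

theorem vVec_leadIdx (h : 1 ≤ β d ∧ β d ≤ k) (γ : ℕ → ℕ) :
    vVec k γ (leadIdx k β d) = if β d = γ d then (ang k ((List.range d).map γ) : ℤ) else 0 := by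
  rw [vVec, leadIdx_div h, leadIdx_mod h, Nat.sub_add_cancel h.1]

theorem vVec_eq_of_lt_leadIdx (h : 1 ≤ β d ∧ β d ≤ k) (hagree : ∀ j < d, β j = γ j)
    (hlt : β d < γ d) {i : ℕ} (hi : i < leadIdx k β d) : vVec k β i = vVec k γ i := by
  rcases lt_or_ge (i / k) d with hid | hid
  · exact vVec_congr_s11 hagree hid
  have hdk : i / k = d :=
    le_antisymm ((Nat.div_le_div_right (c := k) hi.le).trans_eq (leadIdx_div h)) hid
  have hmod : i % k + 1 < β d := by
    have := Nat.div_add_mod i k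
    rw [hdk] at this
    unfold leadIdx at hi
    omega
  rw [vVec, vVec, hdk, if_neg (by omega), if_neg (by omega)]

end LeadingEntry

section VDiff

variable {k t d : ℕ} {α β γ : ℕ → ℕ} {a b : Fin (t * k) → ℕ}

theorem firstRise_of_vDiff (hβ : validJs t k β) (hd : d < t) (hagree : ∀ j < d, β j = γ j)
    (hlt : β d < γ d) (hab : ∀ i : Fin (t * k), (b i : ℤ) - a i = vVec k β i - vVec k γ i) :
    ∃ i : Fin (t * k), (i : ℕ) = leadIdx k β d ∧
      FirstRise a b i (ang k ((List.range d).map β)) := by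
  have hβd := hβ d hd
  refine ⟨⟨_, leadIdx_lt hd hβd⟩, rfl, fun j hj => ?_, ang_pos _ _, ?_⟩
  · have := hab j
    rw [vVec_eq_of_lt_leadIdx hβd hagree hlt hj] at this
    omega
  · have := hab ⟨_, leadIdx_lt hd hβd⟩
    rw [vVec_leadIdx hβd, vVec_leadIdx hβd, if_pos rfl, if_neg hlt.ne] at this
    omega

theorem exists_firstRise_of_lexLt (hβ : validJs t k β) (hγ : validJs t k γ)
    (hab : ∀ i : Fin (t * k), (b i : ℤ) - a i = vVec k β i - vVec k γ i) (h : lexLt a b) :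
    ∃ d < t, (∀ j < d, β j = γ j) ∧ β d < γ d ∧ typeOf t k a b = d + 1 ∧
      ∃ i : Fin (t * k), (i : ℕ) = leadIdx k β d ∧
        FirstRise a b i (ang k ((List.range d).map β)) := by
  have hne : ∃ j, j < t ∧ β j ≠ γ j := by
    by_contra! hβγ
    obtain ⟨i, -, hi⟩ := h
    have := hab i
    rw [vVec_congr_s11 hβγ (Nat.div_lt_of_lt_mul (i.2.trans_eq (Nat.mul_comm t k)))] at this
    omega
  obtain ⟨hd, hβγd⟩ := Nat.find_spec hne
  have hagree : ∀ j < Nat.find hne, β j = γ j := fun j hj =>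
    not_not.1 fun hj' => Nat.find_min hne hj ⟨hj.trans hd, hj'⟩
  have hlt : β (Nat.find hne) < γ (Nat.find hne) := by
    refine hβγd.lt_or_gt.resolve_right fun hgt => h.asymm ?_
    obtain ⟨i, -, hi⟩ := firstRise_of_vDiff (a := b) (b := a) hγ hd
      (fun j hj => (hagree j hj).symm) hgt fun i => by linarith [hab i]
    exact hi.lexLt
  obtain ⟨i, hi, hrise⟩ := firstRise_of_vDiff hβ hd hagree hlt hab
  refine ⟨_, hd, hagree, hlt, ?_, i, hi, hrise⟩
  rw [hrise.typeOf_eq, hi, leadIdx_div (hβ _ hd)]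

theorem agree_of_leadIdx_eq_of_ang_eq {w p : ℕ} (hk : 1 < k) (hα : validJs t k α)
    (hβ : validJs t k β) (hw : w < t) (hp : p < t) (hidx : leadIdx k α w = leadIdx k β p)
    (hang : ang k ((List.range w).map α) = ang k ((List.range p).map β)) :
    ∀ j ≤ p, α j = β j := by
  obtain rfl : w = p := by
    rw [← leadIdx_div (hα w hw), hidx, leadIdx_div (hβ p hp)]
  have hαβp : α w = β w := by
    have := congrArg (· % k) hidx
    simp only [leadIdx_mod (hα w hw), leadIdx_mod (hβ w hp)] at this
    have := hα w hw
    have := hβ w hp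
    omega
  intro j hj
  rcases hj.lt_or_eq with hj | rfl
  · exact eq_of_ang_map_range_eq hk (fun j hj => hα j (hj.trans hw))
      (fun j hj => hβ j (hj.trans hw)) hang j hj
  · exact hαβp

end VDiff

theorem stmt11_general (t k : ℕ) (hk : 2 ≤ k)
    (r₁ r₂ r₃ r₄ s₁ s₂ : Fin (t * k) → ℕ)
    (h12 : lexLt r₁ r₂) (h23 : lexLt r₂ r₃) (h34 : lexLt r₃ r₄) (hs12 : lexLt s₁ s₂)
    (e1 : AtOne t k r₁ s₁) (e2 : AtOne t k r₁ s₂) (e3 : AtOne t k r₂ s₂)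
    (e4 : AtOne t k r₃ s₁) (e5 : AtOne t k r₄ s₂)
    (hty : typeOf t k s₁ s₂ ≤ typeOf t k r₁ r₄) :
    typeOf t k r₁ r₄ < typeOf t k r₁ r₂ := by
  obtain ⟨α, hα, eα⟩ := e1
  obtain ⟨β, hβ, eβ⟩ := e2
  obtain ⟨γ, hγ, eγ⟩ := e3
  obtain ⟨δ, hδ, eδ⟩ := e4
  obtain ⟨ε, hε, eε⟩ := e5
  obtain ⟨m, -, -, hβαm, hs, -⟩ :=
    exists_firstRise_of_lexLt hβ hα (fun i => by linarith [eα i, eβ i]) hs12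
  obtain ⟨p, hp, hβγ, hβγp, h12t, P, hP, hr₂⟩ :=
    exists_firstRise_of_lexLt hβ hγ (fun i => by linarith [eβ i, eγ i]) h12
  obtain ⟨q, -, hβε, -, h14t, Q, hQ, hr₄⟩ :=
    exists_firstRise_of_lexLt hβ hε (fun i => by linarith [eβ i, eε i]) ((h12.trans h23).trans h34)
  obtain ⟨w, hw, -, -, -, W, hW, hr₃⟩ :=
    exists_firstRise_of_lexLt hα hδ (fun i => by linarith [eα i, eδ i]) (h12.trans h23)
  rw [hs, h14t] at hty
  rw [h14t, h12t]
  by_contra! hle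
  rcases (Nat.le_of_succ_le_succ hle).lt_or_eq with hpq | rfl
  · obtain ⟨i, -, hr⟩ := firstRise_of_vDiff (a := r₄) (b := r₂) hε hp
      (fun j hj => (hβε j (hj.trans hpq)).symm.trans (hβγ j hj)) (hβε p hpq ▸ hβγp)
      fun i => by linarith [eγ i, eε i]
    exact hr.lexLt.asymm (h23.trans h34)
  · obtain rfl : Q = P := Fin.ext (hQ.trans hP.symm)
    obtain ⟨rfl, hang⟩ := hr₃.unique (hr₂.of_lexLt_of_lexLt hr₄ h23 h34)
    have hαβ := agree_of_leadIdx_eq_of_ang_eq hk hα hβ hw hp (hW.symm.trans hP) hang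
    exact hβαm.ne (hαβ m (by omega)).symm

/-- If `r₁ < r₂ < r₃ < r₄`, `s₁ < s₂`,
`A_t(r₁,s₁) = A_t(r₁,s₂) = A_t(r₂,s₂) = A_t(r₃,s₁) = A_t(r₄,s₂) = 1`, and
`type(s₁,s₂) ≤ type(r₁,r₄)`, then `type(r₁,r₄) < type(r₁,r₂)`. -/
theorem stmt11 (t k : ℕ) (ht : 2 ≤ t) (hk : 2 ≤ k)
    (r₁ r₂ r₃ r₄ s₁ s₂ : Fin (t * k) → ℕ)
    (h1 : memI t k r₁) (h2 : memI t k r₂) (h3 : memI t k r₃) (h4 : memI t k r₄)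
    (hs1 : memI t k s₁) (hs2 : memI t k s₂)
    (h12 : lexLt r₁ r₂) (h23 : lexLt r₂ r₃) (h34 : lexLt r₃ r₄) (hs12 : lexLt s₁ s₂)
    (e1 : AtOne t k r₁ s₁) (e2 : AtOne t k r₁ s₂) (e3 : AtOne t k r₂ s₂)
    (e4 : AtOne t k r₃ s₁) (e5 : AtOne t k r₄ s₂)
    (hty : typeOf t k s₁ s₂ ≤ typeOf t k r₁ r₄) :
    typeOf t k r₁ r₄ < typeOf t k r₁ r₂ :=
  stmt11_general t k hk r₁ r₂ r₃ r₄ s₁ s₂ h12 h23 h34 hs12 e1 e2 e3 e4 e5 hty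
end

section
/- Let A ∈ {0,1}^{k×l} with A(k, l) = 1 and B ∈ {0,1}^{k'×l'} with B(1, 1) = 1. Define the join A⊕B ∈ {0,1}^{(k+k'−1)×(l+l'−1)} by (A⊕B)(i,j) = A(i,j) if i ≤ k and j ≤ l, (A⊕B)(i,j) = B(i−k+1, j−l+1) if i ≥ k and j ≥ l, and 0 otherwise (the two copies overlap in the single cell (k,l)). Then Ex(A⊕B, n) ≤ Ex(A, n) + Ex(B, n) for all n ≥ 1. -/
/-- `A` contains the pattern `P`: there are strictly increasing row and column maps
carrying the 1-entries of `P` to 1-entries of `A`. -/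
def PatContains {k l m n : ℕ} (P : Fin k → Fin l → Prop) (A : Fin m → Fin n → Bool) : Prop :=
  ∃ (r : Fin k → Fin m) (c : Fin l → Fin n),
    StrictMono r ∧ StrictMono c ∧ ∀ i j, P i j → A (r i) (c j) = true

/-- The number of 1-entries (weight) of a 0–1 matrix. -/
def wt {m n : ℕ} (A : Fin m → Fin n → Bool) : ℕ :=
  (Finset.univ.filter (fun p : Fin m × Fin n => A p.1 p.2 = true)).card

/-- `matEx P n` is the maximum weight of an `n × n` 0–1 matrix avoiding the pattern `P`. -/
noncomputable def matEx {k l : ℕ} (P : Fin k → Fin l → Prop) (n : ℕ) : ℕ :=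
  sSup {w | ∃ A : Fin n → Fin n → Bool, ¬ PatContains P A ∧ wt A = w}

/-!
Let `M` avoid `A ⊕ B` and mark every entry of `M` onto which the southeast corner of some copy of
`A` in `M` is mapped. The unmarked 1-entries avoid `A`: the corner of a copy of `A` among them
would be marked. The marked entries avoid `B`: a copy of `B` in them starts at the corner of a copy
of `A`, and gluing the two copies at that entry gives a copy of `A ⊕ B` in `M`.
-/

lemma wt_le_mul {m n : ℕ} (M : Fin m → Fin n → Bool) : wt M ≤ m * n :=
  (Finset.card_filter_le _ _).trans_eq (by simp)

lemma wt_le_wt_add_wt_and_not {m n : ℕ} (M N : Fin m → Fin n → Bool) :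
    wt M ≤ wt N + wt (fun i j => M i j && !N i j) := by
  unfold wt
  refine (Finset.card_le_card fun p hp => ?_).trans (Finset.card_union_le _ _)
  cases h : N p.1 p.2 <;> simp_all

lemma le_matEx {k l n : ℕ} {P : Fin k → Fin l → Prop} {M : Fin n → Fin n → Bool}
    (h : ¬ PatContains P M) : wt M ≤ matEx P n :=
  le_csSup ⟨n * n, by rintro w ⟨A, -, rfl⟩; exact wt_le_mul A⟩ ⟨M, h, rfl⟩

lemma matEx_le {k l n b : ℕ} {P : Fin k → Fin l → Prop}
    (h : ∀ M : Fin n → Fin n → Bool, ¬ PatContains P M → wt M ≤ b) : matEx P n ≤ b :=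
  csSup_le' <| by rintro w ⟨M, hM, rfl⟩; exact h M hM

section Glue

variable {α : Type*} {k k' : ℕ}

def gluedMap (r : Fin k → α) (r' : Fin k' → α) (i : Fin (k + k' - 1)) : α :=
  if h : i.val < k then r ⟨i, h⟩ else r' ⟨i - (k - 1), by have := i.isLt; omega⟩

lemma gluedMap_of_lt (r : Fin k → α) (r' : Fin k' → α) {i : Fin (k + k' - 1)} (hi : i.val < k) :
    gluedMap r r' i = r ⟨i, hi⟩ :=
  dif_pos hi

lemma gluedMap_of_le (hk : 1 ≤ k) (hk' : 1 ≤ k') {r : Fin k → α} {r' : Fin k' → α}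
    (hrr' : r ⟨k - 1, Nat.sub_lt hk one_pos⟩ = r' ⟨0, hk'⟩) {i : Fin (k + k' - 1)}
    (hi : k - 1 ≤ i.val) :
    gluedMap r r' i = r' ⟨i - (k - 1), by have := i.isLt; omega⟩ := by
  unfold gluedMap
  split_ifs with h
  · have hi' : i.val = k - 1 := by omega
    simpa [hi'] using hrr'
  · rfl

lemma strictMono_gluedMap [Preorder α] (hk : 1 ≤ k) (hk' : 1 ≤ k') {r : Fin k → α}
    {r' : Fin k' → α} (hr : StrictMono r) (hr' : StrictMono r')
    (hrr' : r ⟨k - 1, Nat.sub_lt hk one_pos⟩ = r' ⟨0, hk'⟩) : StrictMono (gluedMap r r') := by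
  intro i j hij
  have hij : i.val < j.val := hij
  by_cases hj : j.val < k
  · rw [gluedMap_of_lt r r' hj, gluedMap_of_lt r r' (hij.trans hj)]
    exact hr hij
  rw [gluedMap_of_le hk hk' hrr' (by omega : k - 1 ≤ j.val)]
  by_cases hi : k - 1 ≤ i.val
  · rw [gluedMap_of_le hk hk' hrr' hi]
    exact hr' (Fin.mk_lt_mk.mpr (by omega))
  · rw [gluedMap_of_lt r r' (by omega : i.val < k)]
    calc r _ < r ⟨k - 1, Nat.sub_lt hk one_pos⟩ := hr (Fin.mk_lt_mk.mpr (by omega))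
      _ = r' ⟨0, hk'⟩ := hrr'
      _ ≤ r' _ := hr'.monotone (Fin.mk_le_mk.mpr (Nat.zero_le _))

end Glue

section Anchor

variable {k l m n : ℕ} {P : Fin k → Fin l → Prop} {M : Fin m → Fin n → Bool}

def PatContainsAt (P : Fin k → Fin l → Prop) (M : Fin m → Fin n → Bool) (a : Fin k) (b : Fin l)
    (i : Fin m) (j : Fin n) : Prop :=
  ∃ (r : Fin k → Fin m) (c : Fin l → Fin n), StrictMono r ∧ StrictMono c ∧ r a = i ∧ c b = j ∧
    ∀ x y, P x y → M (r x) (c y) = true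

lemma PatContainsAt.apply_eq_true {a : Fin k} {b : Fin l} {i : Fin m} {j : Fin n}
    (hP : P a b) (h : PatContainsAt P M a b i j) : M i j = true := by
  obtain ⟨r, c, -, -, rfl, rfl, hcopy⟩ := h
  exact hcopy a b hP

open Classical in
noncomputable def anchorMatrix (P : Fin k → Fin l → Prop) (a : Fin k) (b : Fin l)
    (M : Fin m → Fin n → Bool) : Fin m → Fin n → Bool :=
  fun i j => decide (PatContainsAt P M a b i j)

lemma anchorMatrix_eq_true {a : Fin k} {b : Fin l} {i : Fin m} {j : Fin n} :
    anchorMatrix P a b M i j = true ↔ PatContainsAt P M a b i j := by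
  simp [anchorMatrix]

lemma not_patContains_and_not_anchorMatrix {a : Fin k} {b : Fin l} (hP : P a b) :
    ¬ PatContains P (fun i j => M i j && !anchorMatrix P a b M i j) := by
  rintro ⟨r, c, hr, hc, hcopy⟩
  have hM : ∀ x y, P x y → M (r x) (c y) = true := fun x y hxy =>
    ((Bool.and_eq_true _ _).mp (hcopy x y hxy)).1
  have hanchor : anchorMatrix P a b M (r a) (c b) = true :=
    anchorMatrix_eq_true.mpr ⟨r, c, hr, hc, rfl, rfl, hM⟩
  simpa [hanchor] using hcopy a b hP

end Anchor

def patJoin {k l k' l' : ℕ} (A : Fin k → Fin l → Prop) (B : Fin k' → Fin l' → Prop)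
    (hk' : 1 ≤ k') (hl' : 1 ≤ l') (i : Fin (k + k' - 1)) (j : Fin (l + l' - 1)) : Prop :=
  (∃ (hi : i.val < k) (hj : j.val < l), A ⟨i.val, hi⟩ ⟨j.val, hj⟩) ∨
    (k - 1 ≤ i.val ∧ l - 1 ≤ j.val ∧
      B ⟨i.val - (k - 1), by have := i.isLt; omega⟩ ⟨j.val - (l - 1), by have := j.isLt; omega⟩)

lemma patContains_patJoin {k l k' l' m n : ℕ} (hk : 1 ≤ k) (hl : 1 ≤ l) (hk' : 1 ≤ k')
    (hl' : 1 ≤ l') {A : Fin k → Fin l → Prop} {B : Fin k' → Fin l' → Prop}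
    (hA : A ⟨k - 1, Nat.sub_lt hk one_pos⟩ ⟨l - 1, Nat.sub_lt hl one_pos⟩)
    (hB : B ⟨0, hk'⟩ ⟨0, hl'⟩) {M : Fin m → Fin n → Bool}
    (h : PatContains B
      (anchorMatrix A ⟨k - 1, Nat.sub_lt hk one_pos⟩ ⟨l - 1, Nat.sub_lt hl one_pos⟩ M)) :
    PatContains (patJoin A B hk' hl') M := by
  obtain ⟨r', c', hr', hc', hcopyB⟩ := h
  obtain ⟨r, c, hr, hc, hrr', hcc', hcopyA⟩ := anchorMatrix_eq_true.mp (hcopyB _ _ hB)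
  refine ⟨gluedMap r r', gluedMap c c', strictMono_gluedMap hk hk' hr hr' hrr',
    strictMono_gluedMap hl hl' hc hc' hcc', ?_⟩
  rintro i j (⟨hi, hj, hAij⟩ | ⟨hi, hj, hBij⟩)
  · rw [gluedMap_of_lt r r' hi, gluedMap_of_lt c c' hj]
    exact hcopyA _ _ hAij
  · rw [gluedMap_of_le hk hk' hrr' hi, gluedMap_of_le hl hl' hcc' hj]
    exact (anchorMatrix_eq_true.mp (hcopyB _ _ hBij)).apply_eq_true hA

/-- Keszegh's joining: if `A` has a 1 in its southeast corner and `B` has a 1 in its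
northwest corner, then the join `A ⊕ B` (overlapping the two corners in one cell)
satisfies `Ex(A ⊕ B, n) ≤ Ex(A,n) + Ex(B,n)`. -/
theorem stmt15 (k l k' l' : ℕ) (hk : 1 ≤ k) (hl : 1 ≤ l) (hk' : 1 ≤ k') (hl' : 1 ≤ l')
    (A : Fin k → Fin l → Prop) (B : Fin k' → Fin l' → Prop)
    (hA : A ⟨k - 1, by omega⟩ ⟨l - 1, by omega⟩)
    (hB : B ⟨0, by omega⟩ ⟨0, by omega⟩) :
    ∀ n : ℕ, 1 ≤ n →
      matEx (fun (i : Fin (k + k' - 1)) (j : Fin (l + l' - 1)) =>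
          (∃ (hi : i.val < k) (hj : j.val < l), A ⟨i.val, hi⟩ ⟨j.val, hj⟩) ∨
          (k - 1 ≤ i.val ∧ l - 1 ≤ j.val ∧
            B ⟨i.val - (k - 1), by have := i.isLt; omega⟩
              ⟨j.val - (l - 1), by have := j.isLt; omega⟩)) n
        ≤ matEx A n + matEx B n := by
  intro n _
  refine matEx_le fun M hM => ?_
  set corners :=
    anchorMatrix A ⟨k - 1, Nat.sub_lt hk one_pos⟩ ⟨l - 1, Nat.sub_lt hl one_pos⟩ M
  calc wt M ≤ wt corners + wt (fun i j => M i j && !corners i j) := wt_le_wt_add_wt_and_not M _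
    _ ≤ matEx B n + matEx A n :=
      add_le_add (le_matEx fun h => hM (patContains_patJoin hk hl hk' hl' hA hB h))
        (le_matEx (not_patContains_and_not_anchorMatrix hA))
    _ = matEx A n + matEx B n := add_comm _ _
end
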